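/- Let R be a commutative Noetherian local ring and let 0 → A → B → C → 0 be a short exact sequence of finitely generated R-modules with Ext^1_R(C,R) = 0. Then the dualized sequence 0 → C^* → B^* → A^* → 0 is exact, and there exist finite free presentations of A, B and C, with associated transposes Tr A, Tr B, Tr C, and R-linear maps such that the sequence 0 → Tr C → Tr B → Tr A → 0 is exact. -/

import Mathlib

open CategoryTheory

/-- The `i`-th Ext module `Ext^i_R(X, Y)` of two `R`-modules. -/
noncomputable abbrev extMod (R : Type) [CommRing R] (i : ℕ)
    (X : Type) [AddCommGroup X] [Module R X]
    (Y : Type) [AddCommGroup Y] [Module R Y] : Type :=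
  ((Ext R (ModuleCat R) i).obj (Opposite.op (ModuleCat.of R X))).obj (ModuleCat.of R Y)

/-- A finite free presentation `P_1 → P_0 → M → 0` of `M`. -/
structure FiniteFreePresentation (R : Type) [CommRing R]
    (M : Type) [AddCommGroup M] [Module R M] where
  P1 : Type
  P0 : Type
  [addCommGroup1 : AddCommGroup P1]
  [addCommGroup0 : AddCommGroup P0]
  [module1 : Module R P1]
  [module0 : Module R P0]
  free1 : Module.Free R P1
  free0 : Module.Free R P0
  finite1 : Module.Finite R P1
  finite0 : Module.Finite R P0
  f : P1 →ₗ[R] P0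
  ε : P0 →ₗ[R] M
  surj : Function.Surjective ε
  exact_at : Function.Exact f ε

attribute [instance] FiniteFreePresentation.addCommGroup1 FiniteFreePresentation.addCommGroup0
  FiniteFreePresentation.module1 FiniteFreePresentation.module0

/-- The transpose `Tr M` of `M` associated to a finite free presentation, i.e. the
cokernel of the dual map `P_0^* → P_1^*`. -/
abbrev FiniteFreePresentation.tr {R : Type} [CommRing R] {M : Type}
    [AddCommGroup M] [Module R M] (pr : FiniteFreePresentation R M) : Type :=
  Module.Dual R pr.P1 ⧸ LinearMap.range pr.f.dualMap

/-!
Applying `Hom(-, R)` to `0 → A → B → C → 0` gives the exact sequence `0 → C^* → B^* → A^*`.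
A functional on `A` extends to `B` because `B` is the pushout of `A ← K → P`, where `P → C` is a
surjection from a projective module, lifted to `P → B`, with kernel `K`; and `Ext^1(C, R) = 0`
says precisely that every functional on `K` extends to `P`.

For the transposes, presentations of `A` and `C` are assembled into one of `B` by the horseshoe
construction, with split rows `P_i(A) → P_i(A) × P_i(C) → P_i(C)`. Dualizing gives a map of split
short exact sequences `P_0^* → P_1^*` whose kernels are `C^*, B^*, A^*` and whose cokernels are the
transposes. By the snake lemma `0 → Tr C → Tr B → Tr A → 0` is exact once `B^* → A^*` is
surjective, as then the connecting map `A^* → Tr C` vanishes.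
-/

open LinearMap

section Factorization

variable {R : Type*} [CommRing R] {M N P : Type*} [AddCommGroup M] [Module R M]
  [AddCommGroup N] [Module R N] [AddCommGroup P] [Module R P]

theorem exists_comp_eq_of_injective_of_range_le {u : M →ₗ[R] N} (hu : Function.Injective u)
    {v : P →ₗ[R] N} (hvu : range v ≤ range u) : ∃ w : P →ₗ[R] M, u ∘ₗ w = v :=
  ⟨(LinearEquiv.ofInjective u hu).symm ∘ₗ v.codRestrict (range u) (fun p => hvu ⟨p, rfl⟩),
    by ext; simp⟩

theorem Module.Projective.exists_comp_eq_of_range_le [Module.Projective R P] (u : M →ₗ[R] N)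
    {v : P →ₗ[R] N} (hvu : range v ≤ range u) : ∃ w : P →ₗ[R] M, u ∘ₗ w = v := by
  obtain ⟨w, hw⟩ := Module.projective_lifting_property u.rangeRestrict
    (v.codRestrict (range u) (fun p => hvu ⟨p, rfl⟩)) u.surjective_rangeRestrict
  exact ⟨w, by ext p; exact congr(($hw p : N))⟩

theorem Function.Exact.dualMap {f : M →ₗ[R] N} {g : N →ₗ[R] P} (hfg : Function.Exact f g)
    (hg : Function.Surjective g) : Function.Exact g.dualMap f.dualMap :=
  exact_lcomp_of_exact_of_surjective R hfg hg

theorem LinearMap.surjective_dualMap_inl : Function.Surjective (inl R M N).dualMap :=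
  fun φ => ⟨(fst R M N).dualMap φ, by ext; simp⟩

end Factorization

section Cokernels

open Submodule

variable {R : Type*} [CommRing R] {X Y Z X' Y' Z' : Type*} [AddCommGroup X] [Module R X]
  [AddCommGroup Y] [Module R Y] [AddCommGroup Z] [Module R Z] [AddCommGroup X'] [Module R X']
  [AddCommGroup Y'] [Module R Y'] [AddCommGroup Z'] [Module R Z']
  {i : X →ₗ[R] Y} {p : Y →ₗ[R] Z} {i' : X' →ₗ[R] Y'} {p' : Y' →ₗ[R] Z'}
  {a : X →ₗ[R] X'} {b : Y →ₗ[R] Y'} {c : Z →ₗ[R] Z'}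

theorem LinearMap.range_le_comap_range_of_comp_eq (h : i' ∘ₗ a = b ∘ₗ i) :
    range a ≤ (range b).comap i' := by
  rw [← map_le_iff_le_comap, ← range_comp, h]
  exact range_comp_le_range i b

/-- Snake lemma: the connecting map `ker c → coker a` vanishes when `ker b → ker c` is onto. -/
theorem injective_mapQ_range (hip : Function.Exact i p) (hi' : Function.Injective i')
    (hp'i' : p' ∘ₗ i' = 0) (hia : i' ∘ₗ a = b ∘ₗ i) (hpb : p' ∘ₗ b = c ∘ₗ p)
    (hker : ker c ≤ (ker b).map p) :
    Function.Injective (mapQ (range a) (range b) i' (range_le_comap_range_of_comp_eq hia)) := by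
  rw [← ker_eq_bot, eq_bot_iff]
  intro x hx
  obtain ⟨x, rfl⟩ := mkQ_surjective _ x
  obtain ⟨y, hy⟩ : i' x ∈ range b := (Quotient.mk_eq_zero _).1 hx
  obtain ⟨y₀, hy₀, hpy₀⟩ : p y ∈ (ker b).map p := hker <| by
    rw [mem_ker, ← LinearMap.comp_apply c, ← hpb, LinearMap.comp_apply, hy,
      ← LinearMap.comp_apply p', hp'i', LinearMap.zero_apply]
  obtain ⟨x₀, hx₀⟩ := (hip (y - y₀)).1 (by rw [map_sub, hpy₀, sub_self])
  have : i' (a x₀) = i' x := by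
    rw [← LinearMap.comp_apply i', hia, LinearMap.comp_apply, hx₀, map_sub, hy, mem_ker.1 hy₀,
      sub_zero]
  rw [mem_bot, mkQ_apply, Quotient.mk_eq_zero, ← hi' this]
  exact mem_range_self a x₀

theorem exact_mapQ_range (hi'p' : Function.Exact i' p') (hp : Function.Surjective p)
    (hia : i' ∘ₗ a = b ∘ₗ i) (hpb : p' ∘ₗ b = c ∘ₗ p) :
    Function.Exact (mapQ (range a) (range b) i' (range_le_comap_range_of_comp_eq hia))
      (mapQ (range b) (range c) p' (range_le_comap_range_of_comp_eq hpb)) := by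
  rw [hi'p'.exact_mapQ_iff, ← range_comp, hpb, range_comp_of_range_eq_top c (range_eq_top.2 hp)]
  exact inf_le_right

theorem surjective_mapQ_range (hp' : Function.Surjective p') (hpb : p' ∘ₗ b = c ∘ₗ p) :
    Function.Surjective (mapQ (range b) (range c) p' (range_le_comap_range_of_comp_eq hpb)) := by
  intro z
  obtain ⟨z, rfl⟩ := mkQ_surjective _ z
  obtain ⟨y, rfl⟩ := hp' z
  exact ⟨mkQ _ y, rfl⟩

end Cokernels

namespace CategoryTheory.ProjectiveResolution

variable {R : Type} [CommRing R] {C : Type} [AddCommGroup C] [Module R C]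
  {Y : Type} [AddCommGroup Y] [Module R Y]

theorem exists_comp_d_eq_of_subsingleton_ext_one (P : ProjectiveResolution (ModuleCat.of R C))
    (hext : Subsingleton (extMod R 1 C Y)) (φ : P.complex.X 1 →ₗ[R] Y)
    (hφ : φ ∘ₗ (P.complex.d 2 1).hom = 0) :
    ∃ ψ : P.complex.X 0 →ₗ[R] Y, ψ ∘ₗ (P.complex.d 1 0).hom = φ := by
  let K := P.complex.linearYonedaObj R (ModuleCat.of R Y)
  have hzero : Limits.IsZero (K.homology 1) :=
    (@ModuleCat.isZero_of_subsingleton _ _ _ hext).of_iso (P.isoExt 1 _).symm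
  have hexact := (K.exactAt_iff' 0 1 2 (by simp) (by simp)).1
    ((K.exactAt_iff_isZero_homology 1).2 hzero)
  rw [ShortComplex.moduleCat_exact_iff] at hexact
  obtain ⟨ψ, hψ⟩ := hexact (ModuleCat.ofHom φ) (ModuleCat.hom_ext hφ)
  exact ⟨ψ.hom, congrArg ModuleCat.Hom.hom hψ⟩

theorem exists_comp_subtype_eq_of_subsingleton_ext_one
    (P : ProjectiveResolution (ModuleCat.of R C)) (hext : Subsingleton (extMod R 1 C Y))
    (ψ : ker (P.π.f 0).hom →ₗ[R] Y) :
    ∃ φ : P.complex.X 0 →ₗ[R] Y, φ ∘ₗ (ker (P.π.f 0).hom).subtype = ψ := by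
  have hd : ∀ x, (P.complex.d 1 0).hom x ∈ ker (P.π.f 0).hom := fun x =>
    congr($(P.complex_d_comp_π_f_zero).hom x)
  let d := (P.complex.d 1 0).hom.codRestrict _ hd
  have hd_surj : Function.Surjective d := by
    rintro ⟨x, hx⟩
    obtain ⟨y, rfl⟩ := (ShortComplex.moduleCat_exact_iff _).1 P.exact₀ x hx
    exact ⟨y, rfl⟩
  obtain ⟨φ, hφ⟩ := exists_comp_d_eq_of_subsingleton_ext_one P hext (ψ ∘ₗ d) <| by
    ext x
    have hdd : d ((P.complex.d 2 1).hom x) = 0 :=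
      Subtype.ext (show (P.complex.d 2 1 ≫ P.complex.d 1 0).hom x = 0 by simp)
    rw [LinearMap.comp_apply, LinearMap.comp_apply, hdd, map_zero, LinearMap.zero_apply]
  exact ⟨φ, (cancel_right hd_surj).1 hφ⟩

end CategoryTheory.ProjectiveResolution

section Pushout

variable {R : Type*} [CommRing R] {A B C P Y : Type*} [AddCommGroup A] [Module R A]
  [AddCommGroup B] [Module R B] [AddCommGroup C] [Module R C] [AddCommGroup P] [Module R P]
  [AddCommGroup Y] [Module R Y] {f : A →ₗ[R] B} {g : B →ₗ[R] C}

theorem surjective_coprod_of_exact (hfg : Function.Exact f g) {σ : P →ₗ[R] B}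
    (hσ : Function.Surjective (g ∘ₗ σ)) : Function.Surjective (f.coprod σ) := by
  intro b
  obtain ⟨p, hp⟩ := hσ (g b)
  obtain ⟨a, ha⟩ := (hfg (b - σ p)).1 (by simp [← hp])
  exact ⟨(a, p), by simp [ha]⟩

theorem exact_neg_prod_subtype_coprod (hf : Function.Injective f) (hfg : Function.Exact f g)
    (β : P →ₗ[R] B) (γ : ker (g ∘ₗ β) →ₗ[R] A) (hγ : f ∘ₗ γ = β ∘ₗ (ker (g ∘ₗ β)).subtype) :
    Function.Exact ((-γ).prod (ker (g ∘ₗ β)).subtype) (f.coprod β) := by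
  rintro ⟨a, p⟩
  constructor
  · intro hap
    have hap : f a + β p = 0 := hap
    have hp : p ∈ ker (g ∘ₗ β) := by
      simpa [hfg.apply_apply_eq_zero] using congrArg g hap
    have hγp : f (γ ⟨p, hp⟩) = β p := congr($hγ ⟨p, hp⟩)
    refine ⟨⟨p, hp⟩, Prod.ext (hf ?_) rfl⟩
    simp [hγp, eq_neg_of_add_eq_zero_left hap]
  · rintro ⟨q, hq⟩
    rw [← hq]
    have hγq : f (γ q) = β q := congr($hγ q)
    simp [hγq]

theorem exists_comp_eq_of_forall_exists_comp_subtype_eq (hf : Function.Injective f)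
    (hfg : Function.Exact f g) (β : P →ₗ[R] B) (hβ : Function.Surjective (g ∘ₗ β))
    (hext : ∀ ψ : ker (g ∘ₗ β) →ₗ[R] Y, ∃ φ : P →ₗ[R] Y, φ ∘ₗ (ker (g ∘ₗ β)).subtype = ψ)
    (a : A →ₗ[R] Y) : ∃ b : B →ₗ[R] Y, b ∘ₗ f = a := by
  obtain ⟨γ, hγ⟩ := exists_comp_eq_of_injective_of_range_le hf (v := β ∘ₗ (ker (g ∘ₗ β)).subtype)
    (by rintro _ ⟨q, rfl⟩; exact (hfg _).1 q.2)
  obtain ⟨φ, hφ⟩ := hext (a ∘ₗ γ)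
  have hexact := exact_lcomp_of_exact_of_surjective Y
    (exact_neg_prod_subtype_coprod hf hfg β γ hγ) (surjective_coprod_of_exact hfg hβ)
  obtain ⟨b, hb⟩ := (hexact (a.coprod φ)).1 <| by
      ext q
      have hφq : φ q = a (γ q) := congr($hφ q)
      simp [hφq]
  refine ⟨b, ?_⟩
  rw [← coprod_inl f β, ← comp_assoc]
  exact congr($hb ∘ₗ inl R A P).trans (coprod_inl a φ)

end Pushout

theorem exists_comp_eq_of_subsingleton_ext_one {R : Type} [CommRing R] {A B C Y : Type}
    [AddCommGroup A] [Module R A] [AddCommGroup B] [Module R B] [AddCommGroup C] [Module R C]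
    [AddCommGroup Y] [Module R Y] {f : A →ₗ[R] B} {g : B →ₗ[R] C} (hf : Function.Injective f)
    (hfg : Function.Exact f g) (hg : Function.Surjective g) (hext : Subsingleton (extMod R 1 C Y))
    (a : A →ₗ[R] Y) : ∃ b : B →ₗ[R] Y, b ∘ₗ f = a := by
  obtain ⟨P⟩ := HasProjectiveResolution.out (Z := ModuleCat.of R C)
  obtain ⟨β, hβ⟩ := Module.projective_lifting_property g (P.π.f 0).hom hg
  refine exists_comp_eq_of_forall_exists_comp_subtype_eq hf hfg β ?_ ?_ a <;> rw [hβ]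
  · exact (ModuleCat.epi_iff_surjective _).1 inferInstance
  · exact P.exists_comp_subtype_eq_of_subsingleton_ext_one hext

section Horseshoe

variable {R : Type*} [CommRing R] {A B C M₁ M₀ N₁ N₀ : Type*} [AddCommGroup A] [Module R A]
  [AddCommGroup B] [Module R B] [AddCommGroup C] [Module R C] [AddCommGroup M₁] [Module R M₁]
  [AddCommGroup M₀] [Module R M₀] [AddCommGroup N₁] [Module R N₁] [AddCommGroup N₀] [Module R N₀]
  {f : A →ₗ[R] B} {g : B →ₗ[R] C} {dA : M₁ →ₗ[R] M₀} {εA : M₀ →ₗ[R] A} {dC : N₁ →ₗ[R] N₀}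
  {εC : N₀ →ₗ[R] C} {σ : N₀ →ₗ[R] B} {h : N₁ →ₗ[R] M₀}

theorem surjective_comp_coprod_of_exact (hfg : Function.Exact f g) (hεA : Function.Surjective εA)
    (hσ : Function.Surjective (g ∘ₗ σ)) : Function.Surjective ((f ∘ₗ εA).coprod σ) := by
  have : (f ∘ₗ εA).coprod σ = f.coprod σ ∘ₗ εA.prodMap LinearMap.id := by ext <;> simp
  rw [this, coe_comp, coe_prodMap]
  exact (surjective_coprod_of_exact hfg hσ).comp (hεA.prodMap Function.surjective_id)

theorem exists_comp_comp_eq_neg_comp [Module.Projective R N₁] (hfg : Function.Exact f g)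
    (hεA : Function.Surjective εA) (hC : εC ∘ₗ dC = 0) (hσ : g ∘ₗ σ = εC) :
    ∃ h : N₁ →ₗ[R] M₀, f ∘ₗ εA ∘ₗ h = -(σ ∘ₗ dC) := by
  rw [← hσ] at hC
  obtain ⟨h, hh⟩ := Module.Projective.exists_comp_eq_of_range_le (f ∘ₗ εA) (v := -(σ ∘ₗ dC)) <| by
    rw [range_comp_of_range_eq_top f (range_eq_top.2 hεA), ← hfg.linearMap_ker_eq]
    rintro _ ⟨y, rfl⟩
    simpa using congr($hC y)
  exact ⟨h, hh⟩

theorem exact_horseshoe (hf : Function.Injective f) (hfg : Function.Exact f g)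
    (hA : Function.Exact dA εA) (hC : Function.Exact dC εC) (hσ : g ∘ₗ σ = εC)
    (hh : f ∘ₗ εA ∘ₗ h = -(σ ∘ₗ dC)) :
    Function.Exact ((dA.coprod h).prod (dC ∘ₗ snd R M₁ N₁)) ((f ∘ₗ εA).coprod σ) := by
  have hσ' (q : N₀) : g (σ q) = εC q := congr($hσ q)
  have hh' (y : N₁) : f (εA (h y)) = -σ (dC y) := congr($hh y)
  rintro ⟨p, q⟩
  constructor
  · intro hpq
    have hpq : f (εA p) + σ q = 0 := hpq
    obtain ⟨y, rfl⟩ := (hC q).1 <| by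
      simpa [hfg.apply_apply_eq_zero, hσ'] using congrArg g hpq
    obtain ⟨x, hx⟩ := (hA (p - h y)).1 <| by
      rw [map_sub, sub_eq_zero]
      exact hf (by rw [hh', eq_neg_of_add_eq_zero_left hpq])
    exact ⟨(x, y), by simp [hx]⟩
  · rintro ⟨⟨x, y⟩, hxy⟩
    rw [← hxy]
    simp [hA.apply_apply_eq_zero, hh']

end Horseshoe

namespace FiniteFreePresentation

attribute [local instance] free0 free1 finite0 finite1

variable {R : Type} [CommRing R] {A B C : Type} [AddCommGroup A] [Module R A]
  [AddCommGroup B] [Module R B] [AddCommGroup C] [Module R C]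

theorem nonempty_of_finitePresentation [Module.FinitePresentation R A] :
    Nonempty (FiniteFreePresentation R A) := by
  obtain ⟨n, m, ε, f, hε, hfε⟩ := Module.FinitePresentation.exists_fin' R A
  exact ⟨{ P1 := Fin m → R
           P0 := Fin n → R
           free1 := inferInstance
           free0 := inferInstance
           finite1 := inferInstance
           finite0 := inferInstance
           f := f
           ε := ε
           surj := hε
           exact_at := hfε }⟩

variable {f : A →ₗ[R] B} {g : B →ₗ[R] C}

/-- The horseshoe presentation `P_1(A) × P_1(C) → P_0(A) × P_0(C) → B`: `σ` lifts the
augmentation of `C` to `B`, and `h` corrects the relations of `C` so that the composite vanishes. -/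
noncomputable def horseshoe (prA : FiniteFreePresentation R A) (prC : FiniteFreePresentation R C)
    (hf : Function.Injective f) (hfg : Function.Exact f g) (σ : prC.P0 →ₗ[R] B)
    (hσ : g ∘ₗ σ = prC.ε) (h : prC.P1 →ₗ[R] prA.P0) (hh : f ∘ₗ prA.ε ∘ₗ h = -(σ ∘ₗ prC.f)) :
    FiniteFreePresentation R B where
  P1 := prA.P1 × prC.P1
  P0 := prA.P0 × prC.P0
  free1 := inferInstance
  free0 := inferInstance
  finite1 := inferInstance
  finite0 := inferInstance
  f := (prA.f.coprod h).prod (prC.f ∘ₗ snd R prA.P1 prC.P1)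
  ε := (f ∘ₗ prA.ε).coprod σ
  surj := surjective_comp_coprod_of_exact hfg prA.surj (hσ ▸ prC.surj)
  exact_at := exact_horseshoe hf hfg prA.exact_at prC.exact_at hσ hh

theorem exists_shortExact_tr_horseshoe (prA : FiniteFreePresentation R A)
    (prC : FiniteFreePresentation R C) (hf : Function.Injective f) (hfg : Function.Exact f g)
    (σ : prC.P0 →ₗ[R] B) (hσ : g ∘ₗ σ = prC.ε) (h : prC.P1 →ₗ[R] prA.P0)
    (hh : f ∘ₗ prA.ε ∘ₗ h = -(σ ∘ₗ prC.f)) (hdual : Function.Surjective f.dualMap) :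
    ∃ (v : prC.tr →ₗ[R] (horseshoe prA prC hf hfg σ hσ h hh).tr)
      (w : (horseshoe prA prC hf hfg σ hσ h hh).tr →ₗ[R] prA.tr),
      Function.Injective v ∧ Function.Exact v w ∧ Function.Surjective w := by
  set prB := horseshoe prA prC hf hfg σ hσ h hh
  have hrow (M N : Type) [AddCommGroup M] [Module R M] [AddCommGroup N] [Module R N] :
      Function.Exact (snd R M N).dualMap (inl R M N).dualMap :=
    Function.Exact.inl_snd.dualMap snd_surjective
  have hia : (snd R prA.P1 prC.P1).dualMap ∘ₗ prC.f.dualMap =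
      prB.f.dualMap ∘ₗ (snd R prA.P0 prC.P0).dualMap :=
    rfl
  have hpb : (inl R prA.P1 prC.P1).dualMap ∘ₗ prB.f.dualMap =
      prA.f.dualMap ∘ₗ (inl R prA.P0 prC.P0).dualMap := by
    have : (prA.f.coprod h).prod (prC.f ∘ₗ snd R _ _) ∘ₗ inl R _ _ = inl R _ _ ∘ₗ prA.f := by
      ext <;> simp
    exact congrArg dualMap this
  have hker : ker prA.f.dualMap ≤ (ker prB.f.dualMap).map (inl R prA.P0 prC.P0).dualMap := by
    intro ξ hξ
    obtain ⟨α, rfl⟩ := (prA.exact_at.dualMap prA.surj ξ).1 hξ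
    obtain ⟨β, rfl⟩ := hdual α
    refine ⟨prB.ε.dualMap β, (prB.exact_at.dualMap prB.surj _).2 ⟨β, rfl⟩, ?_⟩
    exact congrArg (dualMap · β) (coprod_inl (f ∘ₗ prA.ε) σ)
  exact ⟨_, _, injective_mapQ_range (hrow _ _) (dualMap_injective_of_surjective snd_surjective)
    (hrow _ _).linearMap_comp_eq_zero hia hpb hker,
    exact_mapQ_range (hrow _ _) surjective_dualMap_inl hia hpb,
    surjective_mapQ_range surjective_dualMap_inl hpb⟩

theorem exists_shortExact_tr (prA : FiniteFreePresentation R A) (prC : FiniteFreePresentation R C)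
    (hf : Function.Injective f) (hfg : Function.Exact f g) (hg : Function.Surjective g)
    (hdual : Function.Surjective f.dualMap) :
    ∃ (prB : FiniteFreePresentation R B) (v : prC.tr →ₗ[R] prB.tr) (w : prB.tr →ₗ[R] prA.tr),
      Function.Injective v ∧ Function.Exact v w ∧ Function.Surjective w := by
  obtain ⟨σ, hσ⟩ := Module.projective_lifting_property g prC.ε hg
  obtain ⟨h, hh⟩ := exists_comp_comp_eq_neg_comp hfg prA.surj prC.exact_at.linearMap_comp_eq_zero hσ
  exact ⟨_, exists_shortExact_tr_horseshoe prA prC hf hfg σ hσ h hh hdual⟩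

end FiniteFreePresentation

theorem dual_exact_and_exists_transpose_short_exact_general
    (R : Type) [CommRing R] [IsNoetherianRing R]
    (A B C : Type) [AddCommGroup A] [Module R A] [AddCommGroup B] [Module R B]
    [AddCommGroup C] [Module R C]
    [Module.Finite R A] [Module.Finite R C]
    (f : A →ₗ[R] B) (g : B →ₗ[R] C)
    (hf : Function.Injective f) (hfg : Function.Exact f g) (hg : Function.Surjective g)
    (hext : Subsingleton (extMod R 1 C R)) :
    (Function.Injective g.dualMap ∧ Function.Exact g.dualMap f.dualMap ∧
      Function.Surjective f.dualMap) ∧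
    ∃ (prA : FiniteFreePresentation R A) (prB : FiniteFreePresentation R B)
      (prC : FiniteFreePresentation R C)
      (v : prC.tr →ₗ[R] prB.tr) (w : prB.tr →ₗ[R] prA.tr),
      Function.Injective v ∧ Function.Exact v w ∧ Function.Surjective w := by
  have hdual : Function.Surjective f.dualMap :=
    exists_comp_eq_of_subsingleton_ext_one hf hfg hg hext
  refine ⟨⟨dualMap_injective_of_surjective hg, hfg.dualMap hg, hdual⟩, ?_⟩
  have := Module.finitePresentation_of_finite R A
  have := Module.finitePresentation_of_finite R C
  obtain ⟨prA⟩ := FiniteFreePresentation.nonempty_of_finitePresentation (R := R) (A := A)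
  obtain ⟨prC⟩ := FiniteFreePresentation.nonempty_of_finitePresentation (R := R) (A := C)
  obtain ⟨prB, hTr⟩ := prA.exists_shortExact_tr prC hf hfg hg hdual
  exact ⟨prA, prB, prC, hTr⟩

/-- Given a short exact sequence `0 → A → B → C → 0` of finitely generated modules
over a commutative Noetherian local ring `R` with `Ext^1_R(C, R) = 0`, the dualized
sequence `0 → C^* → B^* → A^* → 0` is exact, and there exist finite free
presentations of `A`, `B`, `C` with associated transposes and maps such that
`0 → Tr C → Tr B → Tr A → 0` is exact. -/
theorem dual_exact_and_exists_transpose_short_exact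
    (R : Type) [CommRing R] [IsNoetherianRing R] [IsLocalRing R]
    (A B C : Type) [AddCommGroup A] [Module R A] [AddCommGroup B] [Module R B]
    [AddCommGroup C] [Module R C]
    [Module.Finite R A] [Module.Finite R B] [Module.Finite R C]
    (f : A →ₗ[R] B) (g : B →ₗ[R] C)
    (hf : Function.Injective f) (hfg : Function.Exact f g) (hg : Function.Surjective g)
    (hext : Subsingleton (extMod R 1 C R)) :
    (Function.Injective g.dualMap ∧ Function.Exact g.dualMap f.dualMap ∧
      Function.Surjective f.dualMap) ∧
    ∃ (prA : FiniteFreePresentation R A) (prB : FiniteFreePresentation R B)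
      (prC : FiniteFreePresentation R C)
      (v : prC.tr →ₗ[R] prB.tr) (w : prB.tr →ₗ[R] prA.tr),
      Function.Injective v ∧ Function.Exact v w ∧ Function.Surjective w :=
  dual_exact_and_exists_transpose_short_exact_general R A B C f g hf hfg hg hext
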